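/- arXiv:2411.12601 — 2 statements merged into one kernel-verified Lean document; each statement's English description precedes it below -/
import Mathlib

section
/- Let H=(V,E,W) be a finite hypergraph, p>1, L⊆V nonempty with labels y:L→ℝ, and let u:V→ℝ be admissible. Then u is a minimizer of F_H^{con} if and only if there exist vectors β_k∈ℝ^V, k=1,…,m, with β_k∈argmax_{b∈B_k}⟨b,u⟩, such that for every x_i∈V∖L: Σ_{k=1}^m w_k·(max_{x,x'∈e_k}|u(x)−u(x')|)^{p−1}·β_k(x_i) = 0. -/
open Finset

/-- A finite hypergraph on vertex set `V` with `m` hyperedges: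
each hyperedge is a nonempty finite set of vertices and carries a positive weight. -/
structure WeightedHypergraph (V : Type*) [Fintype V] (m : ℕ) where
  e : Fin m → Finset V
  w : Fin m → ℝ
  e_nonempty : ∀ k, (e k).Nonempty
  w_pos : ∀ k, 0 < w k

variable {V : Type*} [Fintype V] {m : ℕ}

/-- Maximal oscillation of `u` on the hyperedge `e k`:
`max_{x_i, x_j ∈ e_k} |u x_i - u x_j|`. -/
noncomputable def osc (H : WeightedHypergraph V m) (u : V → ℝ) (k : Fin m) : ℝ :=
  (H.e k ×ˢ H.e k).sup' ((H.e_nonempty k).product (H.e_nonempty k))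
    (fun q => |u q.1 - u q.2|)

/-- The hypergraph p-Laplacian regularizer
`F_H(u) = ∑ k w_k (max_{x_i,x_j ∈ e_k} |u x_i - u x_j|)^p`. -/
noncomputable def FH (H : WeightedHypergraph V m) (p : ℝ) (u : V → ℝ) : ℝ :=
  ∑ k : Fin m, H.w k * (osc H u k) ^ p

/-- `u` is admissible for the labeled set `L` with labels `y`. -/
def Admissible (L : Finset V) (y u : V → ℝ) : Prop := ∀ x ∈ L, u x = y x

/-- `u` is a minimizer of the constrained functional `F_H^{con}`. -/
def IsMinimizer (H : WeightedHypergraph V m) (p : ℝ) (L : Finset V) (y u : V → ℝ) : Prop :=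
  Admissible L y u ∧ ∀ v : V → ℝ, Admissible L y v → FH H p u ≤ FH H p v

/-- Connectivity of a hypergraph: any two vertices are linked by a chain of hyperedges
with consecutive nonempty intersections. -/
def WeightedHypergraph.Connected [DecidableEq V] (H : WeightedHypergraph V m) : Prop :=
  ∀ x y : V, ∃ l : ℕ, ∃ ks : Fin (l + 1) → Fin m,
    x ∈ H.e (ks 0) ∧ y ∈ H.e (ks (Fin.last l)) ∧
    ∀ i : Fin l, (H.e (ks i.castSucc) ∩ H.e (ks i.succ)).Nonempty

/-- The set `D(u)` of vertices whose values are rigid: labeled vertices together with the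
unlabeled vertices at which every sufficiently small perturbation strictly increases `F_H`. -/
def Dset [DecidableEq V] (H : WeightedHypergraph V m) (p : ℝ) (L : Finset V) (u : V → ℝ) : Set V :=
  {x | x ∈ L ∨ (x ∉ L ∧ ∃ δ > (0 : ℝ), ∀ ε : ℝ, 0 < |ε| → |ε| < δ →
    FH H p u < FH H p (Function.update u x (u x + ε)))}

/-- φ_p(s) = |s|^{p-2} s for s ≠ 0 and φ_p(0) = 0. -/
noncomputable def phiP (p s : ℝ) : ℝ := if s = 0 then 0 else |s| ^ (p - 2) * s

/-- The simplified hypergraph p-Laplacian operator. -/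
noncomputable def LpH [DecidableEq V] (H : WeightedHypergraph V m) (p : ℝ) (u : V → ℝ) (x : V) : ℝ :=
  ∑ k ∈ Finset.univ.filter (fun k => x ∈ H.e k),
    H.w k * phiP p ((H.e k).sup' (H.e_nonempty k) u + (H.e k).inf' (H.e_nonempty k) u - 2 * u x)

/-- The indicator vector `𝟙_x ∈ ℝ^V`. -/
def ind [DecidableEq V] (x : V) : V → ℝ := fun z => if z = x then 1 else 0

/-- Euclidean inner product on `ℝ^V`. -/
noncomputable def ip (b u : V → ℝ) : ℝ := ∑ x : V, b x * u x

/-- `B_e = conv {𝟙_{x_i} - 𝟙_{x_j} : x_i, x_j ∈ e}`. -/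
def Bset [DecidableEq V] (e : Finset V) : Set (V → ℝ) :=
  convexHull ℝ {b | ∃ xi ∈ e, ∃ xj ∈ e, b = ind xi - ind xj}

/-!
Write `σ_k(u) = max_{b ∈ B_k} ⟨b, u⟩` (this is the oscillation of `u` on `e_k`), so that
`F_H = ∑ w_k σ_k^p` is convex and the argmax sets are the subdifferentials of the `σ_k`.
Sufficiency is the tangent inequality `c^p + p c^{p-1} (a - c) ≤ a^p` combined with
`⟨β_k, v⟩ ≤ σ_k(v)`. For necessity, the vectors `∑ w_k σ_k(u)^{p-1} β_k` with `β_k` in the argmax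
sets form a convex compact set; if none of them vanished off `L`, Hahn–Banach would give a
direction `d`, zero on `L`, pairing negatively with all of them. Since the right derivative of
`σ_k` along `d` is `⟨β, d⟩` for a suitable maximizer `β`, `F_H` would decrease along `d`.
-/

open Filter Topology

theorem ConvexOn.add_mul_sub_le_of_hasDerivAt {S : Set ℝ} {f : ℝ → ℝ} {f' x y : ℝ}
    (hf : ConvexOn ℝ S f) (hx : x ∈ S) (hy : y ∈ S) (hf' : HasDerivAt f f' x) :
    f x + f' * (y - x) ≤ f y := by
  rcases lt_trichotomy x y with hxy | rfl | hxy
  · have h := hf.le_slope_of_hasDerivAt hx hy hxy hf'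
    rw [slope_def_field, le_div_iff₀ (sub_pos.2 hxy)] at h
    linarith
  · simp
  · have h := hf.slope_le_of_hasDerivAt hy hx hxy hf'
    rw [slope_def_field, div_le_iff₀ (sub_pos.2 hxy)] at h
    linarith

theorem Real.rpow_add_mul_sub_le {p a c : ℝ} (hp : 1 ≤ p) (ha : 0 ≤ a) (hc : 0 ≤ c) :
    c ^ p + p * c ^ (p - 1) * (a - c) ≤ a ^ p :=
  (convexOn_rpow hp).add_mul_sub_le_of_hasDerivAt hc ha (Real.hasDerivAt_rpow_const (Or.inr hp))

theorem HasDerivAt.nonneg_of_isLocalMinOn_Ici {g : ℝ → ℝ} {g' a : ℝ} (hg : HasDerivAt g g' a)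
    (hmin : IsLocalMinOn g (Set.Ici a) a) : 0 ≤ g' := by
  have := hmin.hasFDerivWithinAt_nonneg hg.hasFDerivAt.hasFDerivWithinAt
    (y := 1) (mem_posTangentConeAt_of_segment_subset ?_)
  · simpa using this
  · simpa [segment_eq_Icc] using Set.Icc_subset_Ici_self

theorem Finset.exists_eventually_sup'_add_mul_eq {ι : Type*} (s : Finset ι) (hs : s.Nonempty)
    (a b : ι → ℝ) : ∃ j ∈ s, a j = s.sup' hs a ∧
      ∀ᶠ t in 𝓝[≥] (0 : ℝ), s.sup' hs (fun i => a i + t * b i) = s.sup' hs a + t * b j := by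
  classical
  set R := s.filter fun i => a i = s.sup' hs a
  have hR : R.Nonempty := by
    obtain ⟨i, hi, h⟩ := s.exists_mem_eq_sup' hs a
    exact ⟨i, mem_filter.2 ⟨hi, h.symm⟩⟩
  obtain ⟨j, hj, hjb⟩ := R.exists_mem_eq_sup' hR b
  obtain ⟨hjs, hja⟩ := mem_filter.1 hj
  refine ⟨j, hjs, hja, ?_⟩
  have hlt : ∀ i ∈ s, a i ≠ s.sup' hs a →
      ∀ᶠ t in 𝓝 (0 : ℝ), a i + t * b i < s.sup' hs a + t * b j := fun i hi hne =>
    ContinuousAt.eventually_lt (by fun_prop) (by fun_prop)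
      (by simpa only [zero_mul, add_zero] using lt_of_le_of_ne (le_sup' a hi) hne)
  filter_upwards [self_mem_nhdsWithin, nhdsWithin_le_nhds ((eventually_all_finset s).2
    fun i hi => eventually_imp_distrib_left.2 (hlt i hi))] with t (ht : 0 ≤ t) hts
  refine le_antisymm (sup'_le _ _ fun i hi => ?_) ?_
  · by_cases h : a i = s.sup' hs a
    · have : b i ≤ b j := hjb ▸ le_sup' b (mem_filter.2 ⟨hi, h⟩)
      rw [h]; gcongr
    · exact (hts i hi h).le
  · rw [← hja]
    exact le_sup' (fun i => a i + t * b i) hjs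

theorem exists_mem_forall_notMem_eq_zero {ι : Type*} [Fintype ι] {S : Set (ι → ℝ)} (L : Finset ι)
    (hconv : Convex ℝ S) (hcomp : IsCompact S)
    (h : ∀ d : ι → ℝ, (∀ i ∈ L, d i = 0) → ∃ s ∈ S, 0 ≤ d ⬝ᵥ s) :
    ∃ s ∈ S, ∀ i ∉ L, s i = 0 := by
  classical
  let P : (ι → ℝ) →ₗ[ℝ] ι → ℝ := LinearMap.pi fun i => if i ∈ L then 0 else LinearMap.proj i
  have hP : ∀ i v, P v i = if i ∈ L then 0 else v i := fun i v => by
    by_cases hi : i ∈ L <;> simp [P, hi]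
  by_contra! hne
  have h0 : (0 : ι → ℝ) ∉ P '' S := by
    rintro ⟨s, hs, hPs⟩
    obtain ⟨i, hi, hsi⟩ := hne s hs
    simpa [hP, hi, hsi] using congrFun hPs i
  obtain ⟨f, c, hfS, hc⟩ := geometric_hahn_banach_closed_point (hconv.linear_image P)
    (hcomp.image P.continuous_of_finiteDimensional).isClosed h0
  set d := (dotProductEquiv ℝ ι).symm f.toLinearMap
  have hf : ∀ v, f v = d ⬝ᵥ v := fun v =>
    (LinearMap.congr_fun ((dotProductEquiv ℝ ι).apply_symm_apply f.toLinearMap) v).symm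
  obtain ⟨s, hs, hds⟩ := h (P d) fun i hi => by simp [hP, hi]
  have hPself : P d ⬝ᵥ s = d ⬝ᵥ P s := by
    simp only [dotProduct, hP]
    exact Finset.sum_congr rfl fun i _ => by split_ifs <;> simp
  have := hfS (P s) ⟨s, hs, rfl⟩
  rw [hf, ← hPself] at this
  rw [map_zero] at hc
  linarith

theorem ip_eq_dotProduct (b u : V → ℝ) : ip b u = b ⬝ᵥ u := rfl

theorem osc_eq_sup'_sub (H : WeightedHypergraph V m) (u : V → ℝ) (k : Fin m) :
    osc H u k = (H.e k ×ˢ H.e k).sup' ((H.e_nonempty k).product (H.e_nonempty k))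
      (fun q => u q.1 - u q.2) := by
  refine le_antisymm (sup'_le _ _ fun q hq => abs_sub_le_iff.2 ⟨?_, ?_⟩)
    (sup'_mono_fun fun q _ => le_abs_self _)
  · exact le_sup' (fun q : V × V => u q.1 - u q.2) hq
  · exact le_sup' (fun q : V × V => u q.1 - u q.2)
      (mk_mem_product (mem_product.1 hq).2 (mem_product.1 hq).1)

theorem osc_nonneg (H : WeightedHypergraph V m) (u : V → ℝ) (k : Fin m) : 0 ≤ osc H u k := by
  obtain ⟨x, hx⟩ := H.e_nonempty k
  exact (abs_nonneg _).trans (le_sup' (fun q : V × V => |u q.1 - u q.2|) (mk_mem_product hx hx))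

def argmaxIp (B : Set (V → ℝ)) (u : V → ℝ) : Set (V → ℝ) :=
  {β | β ∈ B ∧ ∀ b ∈ B, ip b u ≤ ip β u}

section Bset

variable [DecidableEq V]

theorem ip_ind_sub_ind (x y : V) (u : V → ℝ) : ip (ind x - ind y) u = u x - u y := by
  simp [ip, ind, sub_mul, sum_sub_distrib]

omit [Fintype V] in
theorem convex_Bset (e : Finset V) : Convex ℝ (Bset e) := convex_convexHull ℝ _

omit [Fintype V] in
theorem isCompact_Bset (e : Finset V) : IsCompact (Bset e) := by
  refine Set.Finite.isCompact_convexHull ℝ ((e.finite_toSet.image2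
    (fun x y => (ind x - ind y : V → ℝ)) e.finite_toSet).subset ?_)
  rintro _ ⟨x, hx, y, hy, rfl⟩
  exact ⟨x, hx, y, hy, rfl⟩

omit [Fintype V] in
theorem ind_sub_ind_mem_Bset {e : Finset V} {x y : V} (hx : x ∈ e) (hy : y ∈ e) :
    ind x - ind y ∈ Bset e :=
  subset_convexHull ℝ _ ⟨x, hx, y, hy, rfl⟩

theorem ip_le_osc {H : WeightedHypergraph V m} {u b : V → ℝ} {k : Fin m}
    (hb : b ∈ Bset (H.e k)) : ip b u ≤ osc H u k := by
  refine convexHull_min ?_ (convex_halfSpace_le (f := fun b : V → ℝ => ip b u) ?_ _) hb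
  · rintro _ ⟨x, hx, y, hy, rfl⟩
    rw [Set.mem_ofPred_eq, ip_ind_sub_ind, osc_eq_sup'_sub]
    exact le_sup' (fun q : V × V => u q.1 - u q.2) (mk_mem_product hx hy)
  · exact ⟨fun _ _ => add_dotProduct _ _ _, fun _ _ => smul_dotProduct _ _ _⟩

theorem mem_argmaxIp_Bset_iff {H : WeightedHypergraph V m} {u β : V → ℝ} {k : Fin m} :
    β ∈ argmaxIp (Bset (H.e k)) u ↔ β ∈ Bset (H.e k) ∧ ip β u = osc H u k := by
  refine ⟨fun ⟨hβ, hmax⟩ => ⟨hβ, (ip_le_osc hβ).antisymm ?_⟩,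
    fun ⟨hβ, hβu⟩ => ⟨hβ, fun b hb => hβu ▸ ip_le_osc hb⟩⟩
  obtain ⟨q, hq, hqu⟩ := (H.e k ×ˢ H.e k).exists_mem_eq_sup'
    ((H.e_nonempty k).product (H.e_nonempty k)) (fun q => u q.1 - u q.2)
  obtain ⟨hq1, hq2⟩ := mem_product.1 hq
  rw [osc_eq_sup'_sub, hqu, ← ip_ind_sub_ind]
  exact hmax _ (ind_sub_ind_mem_Bset hq1 hq2)

theorem argmaxIp_Bset_eq (H : WeightedHypergraph V m) (u : V → ℝ) (k : Fin m) :
    argmaxIp (Bset (H.e k)) u = Bset (H.e k) ∩ {β | β ⬝ᵥ u = osc H u k} :=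
  Set.ext fun _ => mem_argmaxIp_Bset_iff

theorem convex_argmaxIp_Bset (H : WeightedHypergraph V m) (u : V → ℝ) (k : Fin m) :
    Convex ℝ (argmaxIp (Bset (H.e k)) u) := by
  rw [argmaxIp_Bset_eq]
  exact (convex_Bset _).inter
    (convex_hyperplane ⟨fun _ _ => add_dotProduct _ _ _, fun _ _ => smul_dotProduct _ _ _⟩ _)

theorem isCompact_argmaxIp_Bset (H : WeightedHypergraph V m) (u : V → ℝ) (k : Fin m) :
    IsCompact (argmaxIp (Bset (H.e k)) u) := by
  rw [argmaxIp_Bset_eq]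
  exact (isCompact_Bset _).inter_right (isClosed_eq (by fun_prop) continuous_const)

theorem exists_mem_argmaxIp_eventually_osc_add_smul (H : WeightedHypergraph V m) (u d : V → ℝ)
    (k : Fin m) : ∃ β ∈ argmaxIp (Bset (H.e k)) u,
      ∀ᶠ t in 𝓝[≥] (0 : ℝ), osc H (u + t • d) k = osc H u k + t * ip β d := by
  obtain ⟨q, hq, hqu, hev⟩ := (H.e k ×ˢ H.e k).exists_eventually_sup'_add_mul_eq
    ((H.e_nonempty k).product (H.e_nonempty k)) (fun q => u q.1 - u q.2) (fun q => d q.1 - d q.2)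
  obtain ⟨hq1, hq2⟩ := mem_product.1 hq
  refine ⟨ind q.1 - ind q.2, mem_argmaxIp_Bset_iff.2 ⟨ind_sub_ind_mem_Bset hq1 hq2, ?_⟩, ?_⟩
  · rw [ip_ind_sub_ind, osc_eq_sup'_sub, hqu]
  · filter_upwards [hev] with t ht
    rw [osc_eq_sup'_sub, osc_eq_sup'_sub, ip_ind_sub_ind, ← ht]
    congr 1
    funext q
    simp only [Pi.add_apply, Pi.smul_apply, smul_eq_mul]
    ring

end Bset

section Minimizer

variable [DecidableEq V] {H : WeightedHypergraph V m} {p : ℝ} {L : Finset V} {y u : V → ℝ}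

theorem IsMinimizer.exists_argmaxIp_sum_ip_nonneg (hmin : IsMinimizer H p L y u) (hp : 1 ≤ p)
    (d : V → ℝ) (hd : ∀ x ∈ L, d x = 0) :
    ∃ β : Fin m → V → ℝ, (∀ k, β k ∈ argmaxIp (Bset (H.e k)) u) ∧
      0 ≤ ∑ k, H.w k * osc H u k ^ (p - 1) * ip (β k) d := by
  choose β hβ hev using exists_mem_argmaxIp_eventually_osc_add_smul H u d
  refine ⟨β, hβ, ?_⟩
  set g : ℝ → ℝ := fun t => ∑ k, H.w k * (osc H u k + t * ip (β k) d) ^ p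
  have hg : HasDerivAt g (p * ∑ k, H.w k * osc H u k ^ (p - 1) * ip (β k) d) 0 := by
    refine (HasDerivAt.fun_sum fun k _ => ((((hasDerivAt_id 0).mul_const _).const_add _).rpow_const
      (Or.inr hp)).const_mul (H.w k)).congr_deriv ?_
    rw [mul_sum]
    exact sum_congr rfl fun k _ => by simp only [zero_mul, add_zero]; ring
  have hloc : IsLocalMinOn g (Set.Ici 0) 0 := by
    filter_upwards [eventually_all.2 hev] with t ht
    have hg0 : g 0 = FH H p u := by simp [g, FH]
    have hgt : g t = FH H p (u + t • d) := by simp only [g, FH, ht]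
    rw [hg0, hgt]
    exact hmin.2 _ fun x hx => by simp [hd x hx, hmin.1 x hx]
  exact nonneg_of_mul_nonneg_right (hg.nonneg_of_isLocalMinOn_Ici hloc) (by linarith)

theorem isMinimizer_of_argmaxIp_sum_eq_zero (hp : 1 ≤ p) (hu : Admissible L y u)
    {β : Fin m → V → ℝ} (hβ : ∀ k, β k ∈ argmaxIp (Bset (H.e k)) u)
    (hsum : ∀ x ∉ L, ∑ k, H.w k * osc H u k ^ (p - 1) * β k x = 0) :
    IsMinimizer H p L y u := by
  refine ⟨hu, fun v hv => ?_⟩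
  have hcross : ∑ k, H.w k * osc H u k ^ (p - 1) * ip (β k) (v - u) = 0 := by
    simp only [ip, mul_sum]
    rw [sum_comm]
    refine sum_eq_zero fun x _ => ?_
    by_cases hx : x ∈ L
    · simp [hu x hx, hv x hx]
    · simp_rw [← mul_assoc]
      rw [← sum_mul, hsum x hx, zero_mul]
  have htangent : ∀ k,
      osc H u k ^ p + p * osc H u k ^ (p - 1) * ip (β k) (v - u) ≤ osc H v k ^ p := by
    intro k
    obtain ⟨hβB, hβu⟩ := mem_argmaxIp_Bset_iff.1 (hβ k)
    have hip : ip (β k) (v - u) ≤ osc H v k - osc H u k := by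
      have hβv := ip_le_osc (u := v) hβB
      rw [ip_eq_dotProduct] at hβu hβv ⊢
      rw [dotProduct_sub]
      linarith
    calc _ ≤ osc H u k ^ p + p * osc H u k ^ (p - 1) * (osc H v k - osc H u k) := by
          gcongr
          exact mul_nonneg (by linarith) (Real.rpow_nonneg (osc_nonneg H u k) _)
      _ ≤ osc H v k ^ p := Real.rpow_add_mul_sub_le hp (osc_nonneg H v k) (osc_nonneg H u k)
  calc FH H p u
      = FH H p u + p * ∑ k, H.w k * osc H u k ^ (p - 1) * ip (β k) (v - u) := by
        rw [hcross, mul_zero, add_zero]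
    _ = ∑ k, H.w k * (osc H u k ^ p + p * osc H u k ^ (p - 1) * ip (β k) (v - u)) := by
        rw [FH, mul_sum, ← sum_add_distrib]
        exact sum_congr rfl fun k _ => by ring
    _ ≤ FH H p v := sum_le_sum fun k _ => mul_le_mul_of_nonneg_left (htangent k) (H.w_pos k).le

theorem IsMinimizer.exists_argmaxIp_sum_eq_zero (hmin : IsMinimizer H p L y u) (hp : 1 ≤ p) :
    ∃ β : Fin m → V → ℝ, (∀ k, β k ∈ argmaxIp (Bset (H.e k)) u) ∧
      ∀ x ∉ L, ∑ k, H.w k * osc H u k ^ (p - 1) * β k x = 0 := by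
  set c : Fin m → ℝ := fun k => H.w k * osc H u k ^ (p - 1)
  let Φ : (Fin m → V → ℝ) →ₗ[ℝ] V → ℝ := ∑ k, c k • LinearMap.proj k
  have hΦ : ∀ β, Φ β = ∑ k, c k • β k := fun β => by simp [Φ]
  obtain ⟨_, ⟨β, hβ, rfl⟩, hzero⟩ := exists_mem_forall_notMem_eq_zero
    (S := Φ '' Set.univ.pi fun k => argmaxIp (Bset (H.e k)) u) L
    ((convex_pi fun k _ => convex_argmaxIp_Bset H u k).linear_image Φ)
    ((isCompact_univ_pi fun k => isCompact_argmaxIp_Bset H u k).image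
      Φ.continuous_of_finiteDimensional)
    fun d hd => by
      obtain ⟨β, hβ, hnonneg⟩ := hmin.exists_argmaxIp_sum_ip_nonneg hp d hd
      refine ⟨Φ β, ⟨β, fun k _ => hβ k, rfl⟩, ?_⟩
      rw [hΦ, dotProduct_comm, sum_dotProduct]
      simpa [smul_dotProduct, ip_eq_dotProduct, c, mul_assoc] using hnonneg
  exact ⟨β, fun k => hβ k trivial, fun x hx => by simpa [hΦ, c, mul_assoc] using hzero x hx⟩

end Minimizer

theorem minimizer_iff_subgradient_general [DecidableEq V] (H : WeightedHypergraph V m) (p : ℝ) (hp : 1 < p)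
    (L : Finset V) (y u : V → ℝ) (hu : Admissible L y u) :
    IsMinimizer H p L y u ↔
      ∃ β : Fin m → (V → ℝ),
        (∀ k : Fin m, β k ∈ Bset (H.e k) ∧ ∀ b ∈ Bset (H.e k), ip b u ≤ ip (β k) u) ∧
        ∀ x : V, x ∉ L →
          ∑ k : Fin m, H.w k * (osc H u k) ^ (p - 1) * β k x = 0 := by
  refine ⟨fun hmin => hmin.exists_argmaxIp_sum_eq_zero hp.le, ?_⟩
  rintro ⟨β, hβ, hsum⟩
  exact isMinimizer_of_argmaxIp_sum_eq_zero hp.le hu hβ hsum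

/-- an admissible `u` minimizes `F_H^{con}` iff there are maximizers
`β_k ∈ argmax_{b ∈ B_k} ⟨b, u⟩` with
`∑ k w_k (max_{x,x' ∈ e_k} |u x - u x'|)^{p-1} β_k(x_i) = 0` at every unlabeled vertex. -/
theorem minimizer_iff_subgradient [DecidableEq V] (H : WeightedHypergraph V m) (p : ℝ) (hp : 1 < p)
    (L : Finset V) (hL : L.Nonempty) (y u : V → ℝ) (hu : Admissible L y u) :
    IsMinimizer H p L y u ↔
      ∃ β : Fin m → (V → ℝ),
        (∀ k : Fin m, β k ∈ Bset (H.e k) ∧ ∀ b ∈ Bset (H.e k), ip b u ≤ ip (β k) u) ∧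
        ∀ x : V, x ∉ L →
          ∑ k : Fin m, H.w k * (osc H u k) ^ (p - 1) * β k x = 0 :=
  minimizer_iff_subgradient_general H p hp L y u hu
end

section
/- Let H=(V,E,W) be a connected finite hypergraph, p>1, L⊆V nonempty with labels y:L→ℝ. If u_1,u_2:V→ℝ both satisfy L^p_H u(x_i)=0 for all x_i∈V∖L and u(x_i)=y_i for all x_i∈L, then u_1=u_2. -/
open Finset

variable {V : Type*} [Fintype V] {m : ℕ}

/-!
Comparison principle. Suppose `u₁ - u₂` attains a positive maximum `M`, and call the points where
it does touching points. At a touching point `x`, monotonicity of `φ_p` bounds each summand of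
`L^p_H u₁ x` by the corresponding summand of `L^p_H u₂ x`; since `L^p_H u₁ x ≥ 0 ≥ L^p_H u₂ x`,
all these bounds are equalities, so on each hyperedge through `x` the max and the min of `u₁` are
those of `u₂` shifted by `M`. If moreover `x` minimises `u₁` among the touching points, it then
minimises `u₁` on its whole neighbourhood, which forces `u₁` to be constant on every hyperedge
through `x`, and all of them to consist of touching points. So the touching points with the least
value of `u₁` form a hyperedge-closed set, which by connectivity is `V`, contradicting `u₁ ≤ u₂`
on the nonempty labelled set `L`.
-/

lemma phiP_neg (p s : ℝ) : phiP p (-s) = -phiP p s := by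
  unfold phiP
  split_ifs with h₁ h₂ h₂ <;> simp_all

lemma phiP_of_nonneg {p s : ℝ} (hp : 1 < p) (hs : 0 ≤ s) : phiP p s = s ^ (p - 1) := by
  rcases hs.eq_or_lt with rfl | hs
  · simp [phiP, Real.zero_rpow (by linarith : p - 1 ≠ 0)]
  · rw [phiP, if_neg hs.ne', abs_of_pos hs, ← Real.rpow_add_one hs.ne']
    ring_nf

lemma phiP_strictMono {p : ℝ} (hp : 1 < p) : StrictMono (phiP p) := by
  refine strictMono_of_odd_strictMonoOn_nonneg (phiP_neg p) ?_
  refine (Real.strictMonoOn_rpow_Ici_of_exponent_pos (by linarith : 0 < p - 1)).congr ?_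
  intro s hs
  exact (phiP_of_nonneg hp hs).symm

lemma phiP_nonneg {p s : ℝ} (hp : 1 < p) (hs : 0 ≤ s) : 0 ≤ phiP p s := by
  simpa [phiP] using (phiP_strictMono hp).monotone hs

lemma phiP_eq_zero_iff {p s : ℝ} (hp : 1 < p) : phiP p s = 0 ↔ s = 0 := by
  simpa [phiP] using (phiP_strictMono hp).injective.eq_iff (b := 0)

section SupInfShift

variable {ι α : Type*} [LinearOrder α] [Add α] {s : Finset ι} {f g : ι → α} {c : α}

lemma Finset.sup'_le_sup'_add [AddRightMono α] (hs : s.Nonempty) (h : ∀ i ∈ s, f i ≤ g i + c) :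
    s.sup' hs f ≤ s.sup' hs g + c :=
  Finset.sup'_le _ _ fun i hi => (h i hi).trans (add_le_add_left (le_sup' g hi) c)

lemma Finset.inf'_le_inf'_add (hs : s.Nonempty) (h : ∀ i ∈ s, f i ≤ g i + c) :
    s.inf' hs f ≤ s.inf' hs g + c := by
  obtain ⟨i, hi, hgi⟩ := exists_mem_eq_inf' hs g
  exact (inf'_le f hi).trans (hgi ▸ h i hi)

end SupInfShift

namespace WeightedHypergraph

def edgeArg (H : WeightedHypergraph V m) (u : V → ℝ) (k : Fin m) (x : V) : ℝ :=
  (H.e k).sup' (H.e_nonempty k) u + (H.e k).inf' (H.e_nonempty k) u - 2 * u x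

variable {H : WeightedHypergraph V m} {p : ℝ} {u u₁ u₂ : V → ℝ} {x : V} {M : ℝ}

lemma edgeArg_le_of_touching (hM : ∀ z, u₁ z ≤ u₂ z + M) (hx : u₁ x = u₂ x + M) (k : Fin m) :
    H.edgeArg u₁ k x ≤ H.edgeArg u₂ k x := by
  have hsup := sup'_le_sup'_add (H.e_nonempty k) fun z _ => hM z
  have hinf := inf'_le_inf'_add (H.e_nonempty k) fun z _ => hM z
  unfold edgeArg
  linarith

lemma weighted_phiP_edgeArg_le_of_touching (hp : 1 < p) (hM : ∀ z, u₁ z ≤ u₂ z + M)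
    (hx : u₁ x = u₂ x + M) (k : Fin m) :
    H.w k * phiP p (H.edgeArg u₁ k x) ≤ H.w k * phiP p (H.edgeArg u₂ k x) :=
  mul_le_mul_of_nonneg_left ((phiP_strictMono hp).monotone (edgeArg_le_of_touching hM hx k))
    (H.w_pos k).le

variable [DecidableEq V]

lemma Connected.eq_univ_of_edge_closed (hconn : H.Connected) {S : Set V} (hx : x ∈ S)
    (hS : ∀ k, ∀ z ∈ H.e k, z ∈ S → ∀ z' ∈ H.e k, z' ∈ S) : S = Set.univ := by
  refine Set.eq_univ_of_forall fun y => ?_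
  obtain ⟨l, ks, hxk, hyk, hchain⟩ := hconn x y
  suffices ∀ i : Fin (l + 1), ∀ z ∈ H.e (ks i), z ∈ S from this _ y hyk
  intro i
  induction i using Fin.induction with
  | zero => exact hS _ x hxk hx
  | succ i ih =>
    obtain ⟨z, hz⟩ := hchain i
    obtain ⟨hz_prev, hz_next⟩ := Finset.mem_inter.mp hz
    exact hS _ z hz_next (ih z hz_prev)

lemma LpH_eq_sum_edgeArg (H : WeightedHypergraph V m) (p : ℝ) (u : V → ℝ) (x : V) :
    LpH H p u x = ∑ k ∈ univ.filter (fun k => x ∈ H.e k), H.w k * phiP p (H.edgeArg u k x) :=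
  rfl

/-- At a minimum of `u` over its neighbourhood every summand of `L^p_H u x` is nonnegative, so they
all vanish, i.e. `max = min = u x` on each hyperedge through `x`. -/
lemma eq_of_mem_edge_of_LpH_nonpos (hp : 1 < p) (hmin : ∀ k, x ∈ H.e k → ∀ z ∈ H.e k, u x ≤ u z)
    (hLu : LpH H p u x ≤ 0) {k : Fin m} (hk : x ∈ H.e k) {z : V} (hz : z ∈ H.e k) :
    u z = u x := by
  have hterm_nonneg : ∀ k' ∈ univ.filter (fun k => x ∈ H.e k),
      0 ≤ H.w k' * phiP p (H.edgeArg u k' x) := by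
    intro k' hk'
    have hxk' := (mem_filter.mp hk').2
    have hsup := le_sup' u hxk'
    have hinf := le_inf' (H.e_nonempty k') u (hmin k' hxk')
    exact mul_nonneg (H.w_pos k').le (phiP_nonneg hp (by unfold edgeArg; linarith))
  rw [LpH_eq_sum_edgeArg] at hLu
  have hterm := (sum_eq_zero_iff_of_nonneg hterm_nonneg).mp
    (le_antisymm hLu (sum_nonneg hterm_nonneg)) k (mem_filter.mpr ⟨mem_univ _, hk⟩)
  have harg : H.edgeArg u k x = 0 :=
    (phiP_eq_zero_iff hp).mp ((mul_eq_zero.mp hterm).resolve_left (H.w_pos k).ne')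
  have hsup := le_sup' u hz
  have hinf := le_inf' (H.e_nonempty k) u (hmin k hk)
  have hmin_z := hmin k hk z hz
  unfold edgeArg at harg
  linarith

section Touching

variable (hp : 1 < p) (hM : ∀ z, u₁ z ≤ u₂ z + M) (hx : u₁ x = u₂ x + M)
include hp hM hx

lemma LpH_le_of_touching : LpH H p u₁ x ≤ LpH H p u₂ x :=
  sum_le_sum fun k _ => weighted_phiP_edgeArg_le_of_touching hp hM hx k

variable (h₁ : 0 ≤ LpH H p u₁ x) (h₂ : LpH H p u₂ x ≤ 0)
include h₁ h₂

lemma sup'_inf'_eq_add_of_touching {k : Fin m} (hk : x ∈ H.e k) :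
    (H.e k).sup' (H.e_nonempty k) u₁ = (H.e k).sup' (H.e_nonempty k) u₂ + M ∧
      (H.e k).inf' (H.e_nonempty k) u₁ = (H.e k).inf' (H.e_nonempty k) u₂ + M := by
  have hterm_le := fun k' (_ : k' ∈ univ.filter (fun k => x ∈ H.e k)) =>
    weighted_phiP_edgeArg_le_of_touching (H := H) hp hM hx k'
  rw [LpH_eq_sum_edgeArg] at h₁ h₂
  have hterm := (sum_eq_sum_iff_of_le hterm_le).mp (by linarith [sum_le_sum hterm_le])
    k (mem_filter.mpr ⟨mem_univ _, hk⟩)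
  have harg := (phiP_strictMono hp).injective (mul_left_cancel₀ (H.w_pos k).ne' hterm)
  have hsup := sup'_le_sup'_add (H.e_nonempty k) fun z _ => hM z
  have hinf := inf'_le_inf'_add (H.e_nonempty k) fun z _ => hM z
  unfold edgeArg at harg
  constructor <;> linarith

/-- The minimiser of `u₂` on a hyperedge through `x` is again a touching point, so `x` minimises
`u₁` over its neighbourhood as soon as it minimises `u₁` over the touching points. -/
lemma le_of_mem_edge_of_touching (hmin : ∀ z, u₁ z = u₂ z + M → u₁ x ≤ u₁ z) {k : Fin m}
    (hk : x ∈ H.e k) {z : V} (hz : z ∈ H.e k) : u₁ x ≤ u₁ z := by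
  obtain ⟨z₂, hz₂, hz₂_min⟩ := exists_mem_eq_inf' (H.e_nonempty k) u₂
  have hinf := (sup'_inf'_eq_add_of_touching hp hM hx h₁ h₂ hk).2
  have hle := inf'_le u₁ hz₂
  have hle' := inf'_le u₁ hz
  have := hM z₂
  have htouch : u₁ z₂ = u₂ z₂ + M := by linarith
  linarith [hmin z₂ htouch]

lemma touching_of_mem_edge (hmin : ∀ z, u₁ z = u₂ z + M → u₁ x ≤ u₁ z) {k : Fin m}
    (hk : x ∈ H.e k) {z : V} (hz : z ∈ H.e k) : u₁ z = u₁ x ∧ u₁ z = u₂ z + M := by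
  have hconst : ∀ z ∈ H.e k, u₁ z = u₁ x := fun z hz =>
    eq_of_mem_edge_of_LpH_nonpos hp
      (fun k' hk' z hz => le_of_mem_edge_of_touching hp hM hx h₁ h₂ hmin hk' hz)
      ((LpH_le_of_touching hp hM hx).trans h₂) hk hz
  obtain ⟨z₁, hz₁, hz₁_max⟩ := exists_mem_eq_sup' (H.e_nonempty k) u₁
  have hsup := (sup'_inf'_eq_add_of_touching hp hM hx h₁ h₂ hk).1
  have hle := le_sup' u₂ hz
  have := hM z
  refine ⟨hconst z hz, ?_⟩
  linarith [hconst z hz, hconst z₁ hz₁]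

end Touching

theorem le_of_LpH_nonneg_of_LpH_nonpos (hconn : H.Connected) (hp : 1 < p) {L : Finset V}
    (hL : L.Nonempty) (h₁ : ∀ x ∉ L, 0 ≤ LpH H p u₁ x) (h₂ : ∀ x ∉ L, LpH H p u₂ x ≤ 0)
    (hLu : ∀ x ∈ L, u₁ x ≤ u₂ x) : u₁ ≤ u₂ := by
  by_contra hle
  obtain ⟨z₀, hz₀⟩ : ∃ z, u₂ z < u₁ z := by simpa [Pi.le_def] using hle
  have : Nonempty V := ⟨z₀⟩
  obtain ⟨xM, -, hxM⟩ := exists_mem_eq_sup' univ_nonempty (u₁ - u₂)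
  set M := univ.sup' univ_nonempty (u₁ - u₂)
  have hM : ∀ z, u₁ z ≤ u₂ z + M := fun z => by
    linarith [le_sup' (u₁ - u₂) (mem_univ z), Pi.sub_apply u₁ u₂ z]
  have hM_pos : 0 < M := by linarith [hM z₀]
  have hM_off : ∀ z ∈ L, u₁ z ≠ u₂ z + M := fun z hz => by linarith [hLu z hz]
  have hxM_touch : u₁ xM = u₂ xM + M := by rw [hxM, Pi.sub_apply]; ring
  obtain ⟨x₀, hx₀_touch, hx₀_min⟩ :=
    exists_min_image (univ.filter fun z => u₁ z = u₂ z + M) u₁ ⟨xM, by simpa using hxM_touch⟩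
  set S := {z | u₁ z = u₂ z + M ∧ u₁ z = u₁ x₀}
  have hS_closed : ∀ k, ∀ z ∈ H.e k, z ∈ S → ∀ z' ∈ H.e k, z' ∈ S := by
    rintro k z hzk ⟨hz_touch, hz_val⟩ z' hz'k
    have hzL : z ∉ L := fun hzL => hM_off z hzL hz_touch
    obtain ⟨hval, htouch⟩ := touching_of_mem_edge hp hM hz_touch (h₁ z hzL) (h₂ z hzL)
      (fun w hw => hz_val ▸ hx₀_min w (by simpa using hw)) hzk hz'k
    exact ⟨htouch, hval.trans hz_val⟩
  have hS := hconn.eq_univ_of_edge_closed (show x₀ ∈ S from ⟨by simpa using hx₀_touch, rfl⟩)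
    hS_closed
  obtain ⟨l, hl⟩ := hL
  exact hM_off l hl (hS ▸ Set.mem_univ l).1

end WeightedHypergraph

/-- uniqueness of solutions to the simplified hypergraph p-Laplacian
equation with Dirichlet data on `L`. -/
theorem pLaplacian_equation_unique [DecidableEq V] (H : WeightedHypergraph V m) (hconn : H.Connected)
    (p : ℝ) (hp : 1 < p) (L : Finset V) (hL : L.Nonempty) (y : V → ℝ) (u₁ u₂ : V → ℝ)
    (h₁ : (∀ x : V, x ∉ L → LpH H p u₁ x = 0) ∧ ∀ x ∈ L, u₁ x = y x)
    (h₂ : (∀ x : V, x ∉ L → LpH H p u₂ x = 0) ∧ ∀ x ∈ L, u₂ x = y x) :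
    u₁ = u₂ := by
  obtain ⟨hLu₁, hy₁⟩ := h₁
  obtain ⟨hLu₂, hy₂⟩ := h₂
  have hcompare : ∀ {v w : V → ℝ}, (∀ x ∉ L, LpH H p v x = 0) → (∀ x ∉ L, LpH H p w x = 0) →
      (∀ x ∈ L, v x = w x) → v ≤ w := fun hv hw hvw =>
    H.le_of_LpH_nonneg_of_LpH_nonpos hconn hp hL (fun x hx => (hv x hx).ge)
      (fun x hx => (hw x hx).le) fun x hx => (hvw x hx).le
  have hbdry : ∀ x ∈ L, u₁ x = u₂ x := fun x hx => (hy₁ x hx).trans (hy₂ x hx).symm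
  exact le_antisymm (hcompare hLu₁ hLu₂ hbdry) (hcompare hLu₂ hLu₁ fun x hx => (hbdry x hx).symm)
end
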